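/- Let (S, ⊕, ⊗, 0, 1, ≺, ≤) be a well-founded semiring, I a finite index set, and for each i ∈ I elements cᵢ, xᵢ, yᵢ ∈ S with 1 ≤ cᵢ, cᵢ ≠ 0, and xᵢ ≤ yᵢ for all i. Suppose moreover there exists i₀ ∈ I with xᵢ₀ ≺ yᵢ₀, and either (a) S is strictly monotonic, or (b) xᵢ ≺ yᵢ for all i ∈ I. Then ⊕_{i∈I} (cᵢ ⊗ xᵢ) ≺ ⊕_{i∈I} (cᵢ ⊗ yᵢ). -/

import Mathlib

/-- A well-founded semiring (Definition 3.6 of the paper). -/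
structure WFSemiring (S : Type*) where
  add : S → S → S
  mul : S → S → S
  zero : S
  one : S
  lt : S → S → Prop
  le : S → S → Prop
  add_assoc : ∀ a b c, add (add a b) c = add a (add b c)
  add_comm : ∀ a b, add a b = add b a
  add_zero : ∀ a, add a zero = a
  mul_assoc : ∀ a b c, mul (mul a b) c = mul a (mul b c)
  mul_one : ∀ a, mul a one = a
  one_mul : ∀ a, mul one a = a
  zero_mul : ∀ a, mul zero a = zero
  mul_zero : ∀ a, mul a zero = zero
  right_distrib : ∀ a b x, mul (add a b) x = add (mul a x) (mul b x)
  left_distrib : ∀ x a b, mul x (add a b) = add (mul x a) (mul x b)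
  lt_le : ∀ a b, lt a b → le a b
  le_refl : ∀ a, le a a
  lt_nonempty : ∃ a b, lt a b
  zero_ne_one : zero ≠ one
  /-- SN(≻/≥): there is no ≥-descending sequence with infinitely many strict ≻ steps. -/
  sn : ¬ ∃ f : ℕ → S, (∀ n, le (f (n+1)) (f n)) ∧ (∀ n, ∃ m, n ≤ m ∧ lt (f (m+1)) (f m))
  S1 : ∀ x x' y y', le x x' → le y y' → le (add x y) (add x' y')
  S2 : ∀ x x' y y', lt x x' → lt y y' → lt (add x y) (add x' y')
  S3 : ∀ x x' y, le x x' → le one y →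
        le (mul x y) (mul x' y) ∧ le (mul y x) (mul y x')
  S4 : ∀ x x' y, lt x x' → le one y → y ≠ zero →
        lt (mul x y) (mul x' y) ∧ lt (mul y x) (mul y x')

/-- Finite ⊕-sum in a well-founded semiring (with the empty sum equal to 0). -/
def WFSemiring.sum {S : Type*} (W : WFSemiring S) {n : ℕ} (f : Fin n → S) : S :=
  (List.ofFn f).foldr W.add W.zero


namespace WFSemiring

variable {S : Type*} (W : WFSemiring S)

def StrictlyMonotonic : Prop :=
  ∀ a a' b b' : S, W.lt a a' → W.le b b' → W.lt (W.add a b) (W.add a' b')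

lemma sum_succ {n : ℕ} (f : Fin (n + 1) → S) :
    W.sum f = W.add (f 0) (W.sum fun i => f i.succ) := by
  simp [WFSemiring.sum, List.ofFn_succ]

lemma sum_one (f : Fin 1 → S) : W.sum f = f 0 := by
  rw [sum_succ]
  exact W.add_zero (f 0)

lemma sum_le_sum {n : ℕ} {f g : Fin n → S} (h : ∀ i, W.le (f i) (g i)) :
    W.le (W.sum f) (W.sum g) := by
  induction n with
  | zero => exact W.le_refl W.zero
  | succ m ih =>
    rw [sum_succ, sum_succ]
    exact W.S1 _ _ _ _ (h 0) (ih fun i => h i.succ)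

lemma sum_lt_sum_of_forall_lt {n : ℕ} {f g : Fin (n + 1) → S}
    (h : ∀ i, W.lt (f i) (g i)) : W.lt (W.sum f) (W.sum g) := by
  induction n with
  | zero => rw [sum_one, sum_one]; exact h 0
  | succ m ih =>
    rw [sum_succ, sum_succ _ g]
    exact W.S2 _ _ _ _ (h 0) (ih fun i => h i.succ)

lemma sum_lt_sum_of_le_of_lt (hW : W.StrictlyMonotonic) {n : ℕ} {f g : Fin n → S}
    (hle : ∀ i, W.le (f i) (g i)) {i₀ : Fin n} (hlt : W.lt (f i₀) (g i₀)) :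
    W.lt (W.sum f) (W.sum g) := by
  induction n with
  | zero => exact i₀.elim0
  | succ m ih =>
    rw [sum_succ, sum_succ _ g]
    cases i₀ using Fin.cases with
    | zero => exact hW _ _ _ _ hlt (W.sum_le_sum fun i => hle i.succ)
    | succ j =>
      rw [W.add_comm (f 0), W.add_comm (g 0)]
      exact hW _ _ _ _ (ih (fun i => hle i.succ) hlt) (hle 0)

lemma mul_le_mul_left {c x y : S} (hc : W.le W.one c) (h : W.le x y) :
    W.le (W.mul c x) (W.mul c y) :=
  (W.S3 x y c h hc).2

lemma mul_lt_mul_left {c x y : S} (hc1 : W.le W.one c) (hc0 : c ≠ W.zero) (h : W.lt x y) :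
    W.lt (W.mul c x) (W.mul c y) :=
  (W.S4 x y c h hc1 hc0).2

end WFSemiring

/-- Key step of Theorem 6.9: if 1 ≤ cᵢ, cᵢ ≠ 0 and xᵢ ≤ yᵢ for all i, some
xᵢ₀ ≺ yᵢ₀, and either S is strictly monotonic (S5) or xᵢ ≺ yᵢ for all i, then
⊕ᵢ (cᵢ ⊗ xᵢ) ≺ ⊕ᵢ (cᵢ ⊗ yᵢ). -/
theorem wfs_sum_mul_lt {S : Type*} (W : WFSemiring S) {n : ℕ}
    (c x y : Fin n → S)
    (hc1 : ∀ i, W.le W.one (c i)) (hc0 : ∀ i, c i ≠ W.zero)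
    (hle : ∀ i, W.le (x i) (y i))
    (hstrict : ∃ i₀, W.lt (x i₀) (y i₀))
    (hcase :
      (∀ a a' b b' : S, W.lt a a' → W.le b b' → W.lt (W.add a b) (W.add a' b')) ∨
      (∀ i, W.lt (x i) (y i))) :
    W.lt (W.sum (fun i => W.mul (c i) (x i))) (W.sum (fun i => W.mul (c i) (y i))) := by
  obtain ⟨i₀, hi₀⟩ := hstrict
  rcases hcase with hmono | hall
  · exact W.sum_lt_sum_of_le_of_lt hmono (fun i => W.mul_le_mul_left (hc1 i) (hle i))
      (W.mul_lt_mul_left (hc1 i₀) (hc0 i₀) hi₀)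
  · cases n with
    | zero => exact i₀.elim0
    | succ m => exact W.sum_lt_sum_of_forall_lt fun i => W.mul_lt_mul_left (hc1 i) (hc0 i) (hall i)
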